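/- The following three statements are equivalent: (1) Im R(t) > 0 for every t = τe^{iθ} with τ>0 and 0<θ<π; (2) for every fixed θ ∈ (0,π), the function τ ↦ Σ_{-p_-<k≤p_+} θ_k(τe^{iθ}) - Σ_{-q_-<j≤q_+} η_j(τe^{iθ}) is strictly decreasing on (0,∞); (3) for every fixed τ > 0, the function θ ↦ |t^r Q(t)/P(t)| evaluated at t = τe^{iθ} is strictly decreasing on (0,π). -/

import Mathlib

noncomputable section

/-- The monic real polynomial `∏ (X - τ k)` over indices `-pm < k ≤ pp`. -/
noncomputable def prodPoly (pm pp : ℕ) (τ : ℤ → ℝ) : Polynomial ℝ :=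
  ∏ k ∈ Finset.Ioc (-(pm : ℤ)) (pp : ℤ), (Polynomial.X - Polynomial.C (τ k))

/-- Evaluation of a real polynomial at a complex number. -/
noncomputable def cval (p : Polynomial ℝ) (t : ℂ) : ℂ :=
  Polynomial.aeval t p

/-- `R(t) = r - t P'(t)/P(t) + t Q'(t)/Q(t)`. -/
noncomputable def Rfun (r pm pp qm qp : ℕ) (τ γ : ℤ → ℝ) (t : ℂ) : ℂ :=
  (r : ℂ)
    - t * cval (Polynomial.derivative (prodPoly pm pp τ)) t / cval (prodPoly pm pp τ) t
    + t * cval (Polynomial.derivative (prodPoly qm qp γ)) t / cval (prodPoly qm qp γ) t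

/-- The continuous extension of `P(t) * R(t)`, namely
`r P(t) - t P'(t) + t P(t) Q'(t)/Q(t)`. -/
noncomputable def PRfun (r pm pp qm qp : ℕ) (τ γ : ℤ → ℝ) (t : ℂ) : ℂ :=
  (r : ℂ) * cval (prodPoly pm pp τ) t
    - t * cval (Polynomial.derivative (prodPoly pm pp τ)) t
    + t * cval (prodPoly pm pp τ) t * cval (Polynomial.derivative (prodPoly qm qp γ)) t
        / cval (prodPoly qm qp γ) t

/-- Number of zeros (with multiplicity) lying in `(0, x]`. -/
noncomputable def nPos (pm pp : ℕ) (τ : ℤ → ℝ) (x : ℝ) : ℕ :=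
  ((Finset.Ioc (-(pm : ℤ)) (pp : ℤ)).filter fun k => 0 < τ k ∧ τ k ≤ x).card

/-- Number of zeros (with multiplicity) lying in `[x, 0)`. -/
noncomputable def nNeg (pm pp : ℕ) (τ : ℤ → ℝ) (x : ℝ) : ℕ :=
  ((Finset.Ioc (-(pm : ℤ)) (pp : ℤ)).filter fun k => x ≤ τ k ∧ τ k < 0).card

/-- `Σ_k θ_k(t) - Σ_j η_j(t)` where `θ_k(t) = Arg (t - τ_k)` and `η_j(t) = Arg (t - γ_j)`. -/
noncomputable def angleSum (pm pp qm qp : ℕ) (τ γ : ℤ → ℝ) (t : ℂ) : ℝ :=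
  (∑ k ∈ Finset.Ioc (-(pm : ℤ)) (pp : ℤ), (t - (τ k : ℂ)).arg)
    - ∑ j ∈ Finset.Ioc (-(qm : ℤ)) (qp : ℤ), (t - (γ j : ℂ)).arg

open Polynomial in
lemma derivative_finset_prod' {R ι : Type*} [CommRing R] [DecidableEq ι] (s : Finset ι) (f : ι → R[X]) :
    derivative (∏ i ∈ s, f i) = ∑ i ∈ s, (∏ j ∈ s.erase i, f j) * derivative (f i) := by
  induction s using Finset.induction_on with
  | empty => simp
  | @insert a s ha ih =>
    rw [Finset.prod_insert ha, derivative_mul, ih, Finset.sum_insert ha,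
      Finset.erase_insert ha, Finset.mul_sum]
    congr 1
    · rw [mul_comm]
    · refine Finset.sum_congr rfl fun i hi => ?_
      rw [Finset.erase_insert_of_ne (show a ≠ i from fun h => ha (h ▸ hi)),
        Finset.prod_insert (show a ∉ s.erase i from fun h => ha (Finset.erase_subset _ _ h)),
        mul_assoc]






lemma cval_prodPoly (pm pp : ℕ) (τ : ℤ → ℝ) (t : ℂ) :
    cval (prodPoly pm pp τ) t = ∏ k ∈ Finset.Ioc (-(pm : ℤ)) (pp : ℤ), (t - (τ k : ℂ)) := by
  simp [cval, prodPoly, map_prod]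

lemma sub_ofReal_ne_zero {t : ℂ} (ht : 0 < t.im) (x : ℝ) : t - (x : ℂ) ≠ 0 := by
  intro h
  apply absurd (congrArg Complex.im h)
  simp [ht.ne']

lemma cval_prodPoly_ne_zero (pm pp : ℕ) (τ : ℤ → ℝ) {t : ℂ} (ht : 0 < t.im) :
    cval (prodPoly pm pp τ) t ≠ 0 := by
  rw [cval_prodPoly]
  exact Finset.prod_ne_zero_iff.2 fun k _ => sub_ofReal_ne_zero ht _

lemma cval_deriv_prodPoly (pm pp : ℕ) (τ : ℤ → ℝ) {t : ℂ} (ht : 0 < t.im) :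
    cval (Polynomial.derivative (prodPoly pm pp τ)) t
      = cval (prodPoly pm pp τ) t * ∑ k ∈ Finset.Ioc (-(pm : ℤ)) (pp : ℤ), (t - (τ k : ℂ))⁻¹ := by
  simp only [cval, prodPoly]
  rw [derivative_finset_prod', map_sum, Finset.mul_sum]
  refine Finset.sum_congr rfl fun k hk => ?_
  simp only [map_mul, map_prod, map_sub, Polynomial.aeval_X, Polynomial.aeval_C,
    Polynomial.derivative_sub, Polynomial.derivative_X, Polynomial.derivative_C, sub_zero,
    map_one, mul_one, Complex.coe_algebraMap]
  rw [← Finset.prod_erase_mul _ _ hk, mul_assoc,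
    mul_inv_cancel₀ (sub_ofReal_ne_zero ht (τ k)), mul_one]



noncomputable def gfun (r pm pp qm qp : ℕ) (τ γ : ℤ → ℝ) (t : ℂ) : ℂ :=
  (r : ℂ) * Complex.log t
    + (∑ j ∈ Finset.Ioc (-(qm : ℤ)) (qp : ℤ), Complex.log (t - (γ j : ℂ)))
    - ∑ k ∈ Finset.Ioc (-(pm : ℤ)) (pp : ℤ), Complex.log (t - (τ k : ℂ))

lemma mem_slitPlane_of_im_pos {t : ℂ} (ht : 0 < t.im) : t ∈ Complex.slitPlane :=
  Complex.mem_slitPlane_iff.2 (Or.inr ht.ne')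

lemma ne_zero_of_im_pos {t : ℂ} (ht : 0 < t.im) : t ≠ 0 := by
  intro h; rw [h] at ht; simp at ht

lemma Rfun_eq (r pm pp qm qp : ℕ) (τ γ : ℤ → ℝ) {t : ℂ} (ht : 0 < t.im) :
    Rfun r pm pp qm qp τ γ t
      = (r : ℂ) - t * (∑ k ∈ Finset.Ioc (-(pm : ℤ)) (pp : ℤ), (t - (τ k : ℂ))⁻¹)
        + t * ∑ j ∈ Finset.Ioc (-(qm : ℤ)) (qp : ℤ), (t - (γ j : ℂ))⁻¹ := by
  have hP := cval_prodPoly_ne_zero pm pp τ ht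
  have hQ := cval_prodPoly_ne_zero qm qp γ ht
  rw [Rfun, cval_deriv_prodPoly pm pp τ ht, cval_deriv_prodPoly qm qp γ ht]
  field_simp

lemma hasDerivAt_gfun (r pm pp qm qp : ℕ) (τ γ : ℤ → ℝ) {t : ℂ} (ht : 0 < t.im) :
    HasDerivAt (gfun r pm pp qm qp τ γ) (Rfun r pm pp qm qp τ γ t / t) t := by
  have hlog : ∀ c : ℝ, HasDerivAt (fun s : ℂ => Complex.log (s - (c : ℂ))) (t - (c : ℂ))⁻¹ t := by
    intro c
    have h1 : HasDerivAt (fun s : ℂ => s - (c : ℂ)) 1 t := (hasDerivAt_id t).sub_const _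
    have h2 := h1.clog (by
      apply mem_slitPlane_of_im_pos; simpa using ht)
    simpa using h2
  have h0 : HasDerivAt (fun s : ℂ => (r : ℂ) * Complex.log s) ((r : ℂ) * t⁻¹) t :=
    (Complex.hasDerivAt_log (mem_slitPlane_of_im_pos ht)).const_mul _
  have hγ : HasDerivAt (fun s : ℂ => ∑ j ∈ Finset.Ioc (-(qm : ℤ)) (qp : ℤ),
      Complex.log (s - (γ j : ℂ)))
      (∑ j ∈ Finset.Ioc (-(qm : ℤ)) (qp : ℤ), (t - (γ j : ℂ))⁻¹) t :=
    HasDerivAt.fun_sum fun j _ => hlog (γ j)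
  have hτ : HasDerivAt (fun s : ℂ => ∑ k ∈ Finset.Ioc (-(pm : ℤ)) (pp : ℤ),
      Complex.log (s - (τ k : ℂ)))
      (∑ k ∈ Finset.Ioc (-(pm : ℤ)) (pp : ℤ), (t - (τ k : ℂ))⁻¹) t :=
    HasDerivAt.fun_sum fun k _ => hlog (τ k)
  have := (h0.add hγ).sub hτ
  have heq : Rfun r pm pp qm qp τ γ t / t
      = (r : ℂ) * t⁻¹ + (∑ j ∈ Finset.Ioc (-(qm : ℤ)) (qp : ℤ), (t - (γ j : ℂ))⁻¹)
        - ∑ k ∈ Finset.Ioc (-(pm : ℤ)) (pp : ℤ), (t - (τ k : ℂ))⁻¹ := by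
    rw [Rfun_eq r pm pp qm qp τ γ ht]
    field_simp [ne_zero_of_im_pos ht]
    ring
  rw [heq]
  exact this



lemma angleSum_eq (r pm pp qm qp : ℕ) (τ γ : ℤ → ℝ) (t : ℂ) :
    angleSum pm pp qm qp τ γ t = r * t.arg - (gfun r pm pp qm qp τ γ t).im := by
  rw [angleSum, gfun]
  simp only [Complex.sub_im, Complex.add_im, Complex.mul_im, Complex.natCast_re,
    Complex.natCast_im, Complex.log_im, Complex.im_sum]
  ring

lemma exp_gfun (r pm pp qm qp : ℕ) (τ γ : ℤ → ℝ) {t : ℂ} (ht : 0 < t.im) :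
    Complex.exp (gfun r pm pp qm qp τ γ t)
      = t ^ r * cval (prodPoly qm qp γ) t / cval (prodPoly pm pp τ) t := by
  rw [gfun, Complex.exp_sub, Complex.exp_add, Complex.exp_nat_mul,
    Complex.exp_log (ne_zero_of_im_pos ht), Complex.exp_sum, Complex.exp_sum,
    cval_prodPoly, cval_prodPoly]
  congr 1
  · congr 1
    exact Finset.prod_congr rfl fun j _ => Complex.exp_log (sub_ofReal_ne_zero ht _)
  · exact Finset.prod_congr rfl fun k _ => Complex.exp_log (sub_ofReal_ne_zero ht _)

lemma abs_eq_exp_re_gfun (r pm pp qm qp : ℕ) (τ γ : ℤ → ℝ) {t : ℂ} (ht : 0 < t.im) :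
    ‖t ^ r * cval (prodPoly qm qp γ) t / cval (prodPoly pm pp τ) t‖
      = Real.exp ((gfun r pm pp qm qp τ γ t).re) := by
  rw [← exp_gfun r pm pp qm qp τ γ ht, Complex.norm_exp]

lemma comp_real_deriv {g : ℂ → ℂ} {u : ℝ → ℂ} {g' u' : ℂ} {x : ℝ}
    (hg : HasDerivAt g g' (u x)) (hu : HasDerivAt u u' x) :
    HasDerivAt (fun s => g (u s)) (u' * g') x := by
  have := (hg.hasFDerivAt.restrictScalars ℝ).comp_hasDerivAt x hu
  have h2 : HasDerivAt (g ∘ u) (u' * g') x := by simpa [mul_comm] using this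
  exact h2

lemma im_scaled_pos {τv θ : ℝ} (hτ : 0 < τv) (h1 : 0 < θ) (h2 : θ < Real.pi) :
    0 < ((τv : ℂ) * Complex.exp ((θ : ℂ) * Complex.I)).im := by
  simp only [Complex.mul_im, Complex.ofReal_re, Complex.ofReal_im,
    Complex.exp_ofReal_mul_I_im, zero_mul, add_zero]
  exact mul_pos hτ (Real.sin_pos_of_pos_of_lt_pi h1 h2)

lemma arg_scaled {τv θ : ℝ} (hτ : 0 < τv) (h1 : 0 < θ) (h2 : θ < Real.pi) :
    ((τv : ℂ) * Complex.exp ((θ : ℂ) * Complex.I)).arg = θ := by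
  rw [Complex.exp_mul_I]
  exact Complex.arg_mul_cos_add_sin_mul_I hτ
    ⟨by linarith [Real.pi_pos], le_of_lt h2⟩

lemma hasDerivAt_scaled (θ τv : ℝ) :
    HasDerivAt (fun s : ℝ => (s : ℂ) * Complex.exp ((θ : ℂ) * Complex.I))
      (Complex.exp ((θ : ℂ) * Complex.I)) τv := by
  simpa using (Complex.ofRealCLM.hasDerivAt.mul_const (Complex.exp ((θ : ℂ) * Complex.I)))

lemma hasDerivAt_scaled_theta (θ τv : ℝ) :
    HasDerivAt (fun s : ℝ => (τv : ℂ) * Complex.exp ((s : ℂ) * Complex.I))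
      ((τv : ℂ) * Complex.exp ((θ : ℂ) * Complex.I) * Complex.I) θ := by
  have hw : HasDerivAt (fun z : ℂ => (τv : ℂ) * Complex.exp (z * Complex.I))
      ((τv : ℂ) * (Complex.exp ((θ : ℂ) * Complex.I) * Complex.I)) ((θ : ℝ) : ℂ) := by
    have := (((hasDerivAt_id ((θ : ℝ) : ℂ)).mul_const Complex.I).cexp).const_mul (τv : ℂ)
    simpa using this
  have := hw.comp_ofReal
  simpa [mul_assoc] using this

lemma hasDerivAt_angleSum_ray (r pm pp qm qp : ℕ) (τ γ : ℤ → ℝ) {θ τv : ℝ}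
    (hτ : 0 < τv) (h1 : 0 < θ) (h2 : θ < Real.pi) :
    HasDerivAt (fun s : ℝ =>
        angleSum pm pp qm qp τ γ ((s : ℂ) * Complex.exp ((θ : ℂ) * Complex.I)))
      (-(Rfun r pm pp qm qp τ γ ((τv : ℂ) * Complex.exp ((θ : ℂ) * Complex.I))).im / τv) τv := by
  set E := Complex.exp ((θ : ℂ) * Complex.I) with hE
  set t := (τv : ℂ) * E with htdef
  have ht : 0 < t.im := im_scaled_pos hτ h1 h2
  have hg := hasDerivAt_gfun r pm pp qm qp τ γ ht
  have hcomp := comp_real_deriv (g := gfun r pm pp qm qp τ γ)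
      (u := fun s : ℝ => (s : ℂ) * E) (x := τv) hg (hasDerivAt_scaled θ τv)
  have him := Complex.imCLM.hasFDerivAt.comp_hasDerivAt τv hcomp
  have hval : (E * (Rfun r pm pp qm qp τ γ t / t)).im
      = (Rfun r pm pp qm qp τ γ t).im / τv := by
    have h0 : E * (Rfun r pm pp qm qp τ γ t / t) = Rfun r pm pp qm qp τ γ t / (τv : ℂ) := by
      rw [htdef]
      have hE0 : E ≠ 0 := Complex.exp_ne_zero _
      have hτ0 : ((τv : ℝ) : ℂ) ≠ 0 := Complex.ofReal_ne_zero.mpr hτ.ne'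
      field_simp
    rw [h0, Complex.div_ofReal_im]
  have hfinal : HasDerivAt (fun s : ℝ => (r : ℝ) * θ
      - (gfun r pm pp qm qp τ γ ((s : ℂ) * E)).im)
      (-(Rfun r pm pp qm qp τ γ t).im / τv) τv := by
    have := him.const_sub ((r : ℝ) * θ)
    rw [show Complex.imCLM (E * (Rfun r pm pp qm qp τ γ t / t))
        = (Rfun r pm pp qm qp τ γ t).im / τv from hval] at this
    simpa [neg_div] using this
  refine hfinal.congr_of_eventuallyEq ?_
  filter_upwards [Ioi_mem_nhds hτ] with s hs
  rw [angleSum_eq r pm pp qm qp τ γ, arg_scaled hs h1 h2]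

lemma hasDerivAt_absfun_theta (r pm pp qm qp : ℕ) (τ γ : ℤ → ℝ) {θ τv : ℝ}
    (hτ : 0 < τv) (h1 : 0 < θ) (h2 : θ < Real.pi) :
    HasDerivAt (fun s : ℝ =>
        ‖((τv : ℂ) * Complex.exp ((s : ℂ) * Complex.I)) ^ r
          * cval (prodPoly qm qp γ) ((τv : ℂ) * Complex.exp ((s : ℂ) * Complex.I))
          / cval (prodPoly pm pp τ) ((τv : ℂ) * Complex.exp ((s : ℂ) * Complex.I))‖)
      (-(Rfun r pm pp qm qp τ γ ((τv : ℂ) * Complex.exp ((θ : ℂ) * Complex.I))).im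
        * Real.exp ((gfun r pm pp qm qp τ γ
            ((τv : ℂ) * Complex.exp ((θ : ℂ) * Complex.I))).re)) θ := by
  set E := Complex.exp ((θ : ℂ) * Complex.I) with hE
  set t := (τv : ℂ) * E with htdef
  have ht : 0 < t.im := im_scaled_pos hτ h1 h2
  have hg := hasDerivAt_gfun r pm pp qm qp τ γ ht
  have hcomp := comp_real_deriv (g := gfun r pm pp qm qp τ γ)
      (u := fun s : ℝ => (τv : ℂ) * Complex.exp ((s : ℂ) * Complex.I)) (x := θ)
      hg (hasDerivAt_scaled_theta θ τv)
  have hre := Complex.reCLM.hasFDerivAt.comp_hasDerivAt θ hcomp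
  have hval : Complex.reCLM (t * Complex.I * (Rfun r pm pp qm qp τ γ t / t))
      = -(Rfun r pm pp qm qp τ γ t).im := by
    have ht0 : t ≠ 0 := ne_zero_of_im_pos ht
    have h0 : t * Complex.I * (Rfun r pm pp qm qp τ γ t / t)
        = Rfun r pm pp qm qp τ γ t * Complex.I := by
      field_simp
    rw [h0]
    simp [Complex.mul_I_re]
  rw [hval] at hre
  have hre' : HasDerivAt (fun s : ℝ => (gfun r pm pp qm qp τ γ
      ((τv : ℂ) * Complex.exp ((s : ℂ) * Complex.I))).re)
      (-(Rfun r pm pp qm qp τ γ t).im) θ := hre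
  have hexp' : HasDerivAt (fun s : ℝ => Real.exp ((gfun r pm pp qm qp τ γ
      ((τv : ℂ) * Complex.exp ((s : ℂ) * Complex.I))).re))
      (-(Rfun r pm pp qm qp τ γ t).im * Real.exp ((gfun r pm pp qm qp τ γ t).re)) θ := by
    have := hre'.exp
    rw [mul_comm] at this
    exact this
  refine hexp'.congr_of_eventuallyEq ?_
  have hmem : Set.Ioo (0 : ℝ) Real.pi ∈ nhds θ := Ioo_mem_nhds h1 h2
  filter_upwards [hmem] with s hs
  exact abs_eq_exp_re_gfun r pm pp qm qp τ γ (im_scaled_pos hτ hs.1 hs.2)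

lemma cval_eq_eval_map (p : Polynomial ℝ) (t : ℂ) :
    cval p t = (p.map (algebraMap ℝ ℂ)).eval t := by
  rw [cval, Polynomial.aeval_def, Polynomial.eval_map]

lemma differentiableAt_cval (p : Polynomial ℝ) (t : ℂ) :
    DifferentiableAt ℂ (cval p) t := by
  have : cval p = fun t => (p.map (algebraMap ℝ ℂ)).eval t := funext fun t => cval_eq_eval_map p t
  rw [this]
  exact (p.map (algebraMap ℝ ℂ)).differentiableAt

lemma differentiableAt_Rfun (r pm pp qm qp : ℕ) (τ γ : ℤ → ℝ) {t : ℂ} (ht : 0 < t.im) :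
    DifferentiableAt ℂ (Rfun r pm pp qm qp τ γ) t := by
  have hP := cval_prodPoly_ne_zero pm pp τ ht
  have hQ := cval_prodPoly_ne_zero qm qp γ ht
  apply DifferentiableAt.add
  · apply DifferentiableAt.sub (differentiableAt_const _)
    exact ((differentiableAt_id.mul (differentiableAt_cval _ t)).div
      (differentiableAt_cval _ t) hP)
  · exact ((differentiableAt_id.mul (differentiableAt_cval _ t)).div
      (differentiableAt_cval _ t) hQ)

lemma pos_or_const (r pm pp qm qp : ℕ) (τ γ : ℤ → ℝ)
    (h : ∀ t : ℂ, 0 < t.im → 0 ≤ (Rfun r pm pp qm qp τ γ t).im) :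
    (∀ t : ℂ, 0 < t.im → 0 < (Rfun r pm pp qm qp τ γ t).im) ∨
      (∃ c : ℂ, c.im = 0 ∧ ∀ t : ℂ, 0 < t.im → Rfun r pm pp qm qp τ γ t = c) := by
  set U : Set ℂ := {t : ℂ | 0 < t.im} with hUdef
  have hU : IsOpen U := isOpen_lt continuous_const Complex.continuous_im
  have hpre : IsPreconnected U := (convex_halfSpace_im_gt 0).isPreconnected
  have hA : AnalyticOnNhd ℂ (Rfun r pm pp qm qp τ γ) U := by
    apply DifferentiableOn.analyticOnNhd _ hU
    exact fun t htU => (differentiableAt_Rfun r pm pp qm qp τ γ htU).differentiableWithinAt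
  rcases hA.is_constant_or_isOpen hpre with ⟨c, hc⟩ | hopen
  · have hI : Complex.I ∈ U := by simp [hUdef]
    by_cases hc0 : c.im = 0
    · exact Or.inr ⟨c, hc0, hc⟩
    · left
      intro t htU
      rw [hc t htU]
      have h1 : 0 ≤ c.im := by rw [← hc Complex.I hI]; exact h Complex.I (by simp)
      exact lt_of_le_of_ne h1 (Ne.symm hc0)
  · left
    intro t0 ht0
    by_contra hle
    push_neg at hle
    have heq : (Rfun r pm pp qm qp τ γ t0).im = 0 := le_antisymm hle (h t0 ht0)
    have ho : IsOpen (Rfun r pm pp qm qp τ γ '' U) := hopen U le_rfl hU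
    rcases Metric.isOpen_iff.1 ho _ ⟨t0, ht0, rfl⟩ with ⟨ε, hε, hball⟩
    have hmem : Rfun r pm pp qm qp τ γ t0 - (ε / 2 : ℝ) * Complex.I
        ∈ Metric.ball (Rfun r pm pp qm qp τ γ t0) ε := by
      rw [Metric.mem_ball, Complex.dist_eq]
      have : ‖Rfun r pm pp qm qp τ γ t0 - (ε / 2 : ℝ) * Complex.I
          - Rfun r pm pp qm qp τ γ t0‖ = ε / 2 := by
        rw [sub_sub_cancel_left]
        simp [abs_of_pos hε]
      rw [this]; linarith
    rcases hball hmem with ⟨t1, ht1, hRt1⟩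
    have h1 := h t1 ht1
    rw [hRt1] at h1
    simp only [Complex.sub_im, Complex.mul_im, Complex.ofReal_re, Complex.I_im,
      Complex.ofReal_im, Complex.I_re, mul_zero, add_zero, mul_one, heq] at h1
    linarith

lemma deriv_nonpos_of_strictAntiOn {f : ℝ → ℝ} {s : Set ℝ} {x d : ℝ}
    (hf : HasDerivAt f d x) (hs : StrictAntiOn f s) (hx : x ∈ s)
    (h' : ∀ᶠ y in nhdsWithin x (Set.Ioi x), y ∈ s) : d ≤ 0 := by
  have h1 : Filter.Tendsto (slope f x) (nhdsWithin x (Set.Ioi x)) (nhds d) :=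
    (hasDerivAt_iff_tendsto_slope.1 hf).mono_left
      (nhdsWithin_mono x fun y hy => ne_of_gt hy)
  refine le_of_tendsto h1 ?_
  filter_upwards [h', self_mem_nhdsWithin] with y hy hyx
  have hlt : f y < f x := hs hx hy hyx
  have hpos : 0 < y - x := sub_pos.2 hyx
  rw [slope_def_field]
  exact div_nonpos_of_nonpos_of_nonneg (by linarith) hpos.le

lemma not_strictAntiOn_of_deriv_zero {f : ℝ → ℝ} {a b : ℝ} {s : Set ℝ} (hab : a < b)
    (hsub : Set.Icc a b ⊆ s) (hf : ∀ x ∈ s, HasDerivAt f 0 x) : ¬ StrictAntiOn f s := by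
  intro hanti
  have hconst := constant_of_has_deriv_right_zero
    (f := f) (a := a) (b := b)
    (fun x hx => (hf x (hsub hx)).continuousAt.continuousWithinAt)
    (fun x hx => (hf x (hsub (Set.Ico_subset_Icc_self hx))).hasDerivWithinAt)
    b (Set.right_mem_Icc.2 hab.le)
  have := hanti (hsub (Set.left_mem_Icc.2 hab.le)) (hsub (Set.right_mem_Icc.2 hab.le)) hab
  rw [hconst] at this
  exact lt_irrefl _ this

lemma arg_mem_Ioo_of_im_pos {t : ℂ} (ht : 0 < t.im) : 0 < t.arg ∧ t.arg < Real.pi := by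
  constructor
  · rcases lt_or_eq_of_le (Complex.arg_nonneg_iff.2 ht.le) with h | h
    · exact h
    · exfalso
      have := Complex.arg_eq_zero_iff.1 h.symm
      rw [this.2] at ht; exact lt_irrefl _ ht
  · exact lt_of_le_of_ne (Complex.arg_le_pi t) fun h =>
      by rw [(Complex.arg_eq_pi_iff.1 h).2] at ht; exact lt_irrefl _ ht

lemma decomp_UHP {t : ℂ} (ht : 0 < t.im) :
    t = ((‖t‖ : ℝ) : ℂ) * Complex.exp ((t.arg : ℂ) * Complex.I) :=
  (Complex.norm_mul_exp_arg_mul_I t).symm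

lemma abs_pos_of_im_pos {t : ℂ} (ht : 0 < t.im) : 0 < ‖t‖ :=
  norm_pos_iff.mpr (ne_zero_of_im_pos ht)

/-- `z(θ) = -P(t)/(t^r Q(t))` evaluated at `t = tau(θ) e^{iθ}`. -/
noncomputable def zfun (r pm pp qm qp : ℕ) (τ γ : ℤ → ℝ) (tau : ℝ → ℝ) (θ : ℝ) : ℂ :=
  -(cval (prodPoly pm pp τ) ((tau θ : ℂ) * Complex.exp ((θ : ℂ) * Complex.I)))
    / (((tau θ : ℂ) * Complex.exp ((θ : ℂ) * Complex.I)) ^ r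
        * cval (prodPoly qm qp γ) ((tau θ : ℂ) * Complex.exp ((θ : ℂ) * Complex.I)))

/-- The denominator `P(t) + z t^r Q(t)`, viewed as a formal power series in `t` whose
coefficients are polynomials in `z`. -/
noncomputable def Dgen (r : ℕ) (P Q : Polynomial ℝ) : PowerSeries (Polynomial ℝ) :=
  ((P.map Polynomial.C
      + Polynomial.C Polynomial.X * Polynomial.X ^ r * Q.map Polynomial.C :
      Polynomial (Polynomial ℝ)) : PowerSeries (Polynomial ℝ))

/-- `H` is the sequence of polynomials generated by
`Σ_m H_m(z) t^m = 1/(P(t) + z t^r Q(t))` (Taylor expansion at `t = 0`). -/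
def IsGenSeq (r : ℕ) (P Q : Polynomial ℝ) (H : ℕ → Polynomial ℝ) : Prop :=
  PowerSeries.mk H * Dgen r P Q = 1

theorem stmt3 (r pm pp qm qp : ℕ) (hr : 2 ≤ r) (τ γ : ℤ → ℝ)
    (hτmono : ∀ j k : ℤ, j ∈ Finset.Ioc (-(pm : ℤ)) (pp : ℤ) →
      k ∈ Finset.Ioc (-(pm : ℤ)) (pp : ℤ) → j ≤ k → τ j ≤ τ k)
    (hτneg : ∀ k ∈ Finset.Ioc (-(pm : ℤ)) (pp : ℤ), k ≤ 0 → τ k < 0)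
    (hτpos : ∀ k ∈ Finset.Ioc (-(pm : ℤ)) (pp : ℤ), 1 ≤ k → 0 < τ k)
    (hγmono : ∀ j k : ℤ, j ∈ Finset.Ioc (-(qm : ℤ)) (qp : ℤ) →
      k ∈ Finset.Ioc (-(qm : ℤ)) (qp : ℤ) → j ≤ k → γ j ≤ γ k)
    (hγneg : ∀ j ∈ Finset.Ioc (-(qm : ℤ)) (qp : ℤ), j ≤ 0 → γ j < 0)
    (hγpos : ∀ j ∈ Finset.Ioc (-(qm : ℤ)) (qp : ℤ), 1 ≤ j → 0 < γ j)
 :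
    ((∀ τv θ : ℝ, 0 < τv → 0 < θ → θ < Real.pi →
        0 < (Rfun r pm pp qm qp τ γ ((τv : ℂ) * Complex.exp ((θ : ℂ) * Complex.I))).im) ↔
      (∀ θ : ℝ, 0 < θ → θ < Real.pi →
        StrictAntiOn (fun τv : ℝ =>
            angleSum pm pp qm qp τ γ ((τv : ℂ) * Complex.exp ((θ : ℂ) * Complex.I)))
          (Set.Ioi 0))) ∧
    ((∀ τv θ : ℝ, 0 < τv → 0 < θ → θ < Real.pi →
        0 < (Rfun r pm pp qm qp τ γ ((τv : ℂ) * Complex.exp ((θ : ℂ) * Complex.I))).im) ↔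
      (∀ τv : ℝ, 0 < τv →
        StrictAntiOn (fun θ : ℝ =>
            ‖((τv : ℂ) * Complex.exp ((θ : ℂ) * Complex.I)) ^ r
              * cval (prodPoly qm qp γ) ((τv : ℂ) * Complex.exp ((θ : ℂ) * Complex.I))
              / cval (prodPoly pm pp τ) ((τv : ℂ) * Complex.exp ((θ : ℂ) * Complex.I))‖)
          (Set.Ioo 0 Real.pi))) := by
  -- A → B
  have hAB : (∀ τv θ : ℝ, 0 < τv → 0 < θ → θ < Real.pi →
      0 < (Rfun r pm pp qm qp τ γ ((τv : ℂ) * Complex.exp ((θ : ℂ) * Complex.I))).im) →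
      (∀ θ : ℝ, 0 < θ → θ < Real.pi →
        StrictAntiOn (fun τv : ℝ =>
            angleSum pm pp qm qp τ γ ((τv : ℂ) * Complex.exp ((θ : ℂ) * Complex.I)))
          (Set.Ioi 0)) := by
    intro hA θ h1 h2
    apply strictAntiOn_of_deriv_neg (convex_Ioi 0)
    · intro x hx
      exact (hasDerivAt_angleSum_ray r pm pp qm qp τ γ hx h1 h2).continuousAt.continuousWithinAt
    · intro x hx
      rw [interior_Ioi] at hx
      rw [(hasDerivAt_angleSum_ray r pm pp qm qp τ γ hx h1 h2).deriv]
      exact div_neg_of_neg_of_pos (neg_lt_zero.2 (hA x θ hx h1 h2)) hx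
  -- B → Im R ≥ 0
  have hBIm : (∀ θ : ℝ, 0 < θ → θ < Real.pi →
      StrictAntiOn (fun τv : ℝ =>
          angleSum pm pp qm qp τ γ ((τv : ℂ) * Complex.exp ((θ : ℂ) * Complex.I)))
        (Set.Ioi 0)) →
      ∀ t : ℂ, 0 < t.im → 0 ≤ (Rfun r pm pp qm qp τ γ t).im := by
    intro hB t ht
    obtain ⟨h1, h2⟩ := arg_mem_Ioo_of_im_pos ht
    have hτv := abs_pos_of_im_pos ht
    have hd := hasDerivAt_angleSum_ray r pm pp qm qp τ γ hτv h1 h2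
    rw [← decomp_UHP ht] at hd
    have hev : ∀ᶠ y in nhdsWithin (‖t‖) (Set.Ioi (‖t‖)),
        y ∈ Set.Ioi (0 : ℝ) := by
      filter_upwards [self_mem_nhdsWithin] with y hy
      exact lt_trans hτv hy
    have hle := deriv_nonpos_of_strictAntiOn hd (hB _ h1 h2) (Set.mem_Ioi.2 hτv) hev
    by_contra hneg
    push_neg at hneg
    have : 0 < -(Rfun r pm pp qm qp τ γ t).im / ‖t‖ :=
      div_pos (by linarith) hτv
    linarith
  -- B → A
  have hBA : (∀ θ : ℝ, 0 < θ → θ < Real.pi →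
      StrictAntiOn (fun τv : ℝ =>
          angleSum pm pp qm qp τ γ ((τv : ℂ) * Complex.exp ((θ : ℂ) * Complex.I)))
        (Set.Ioi 0)) →
      (∀ τv θ : ℝ, 0 < τv → 0 < θ → θ < Real.pi →
        0 < (Rfun r pm pp qm qp τ γ ((τv : ℂ) * Complex.exp ((θ : ℂ) * Complex.I))).im) := by
    intro hB
    rcases pos_or_const r pm pp qm qp τ γ (hBIm hB) with hpos | ⟨c, hc0, hc⟩
    · intro τv θ hτ h1 h2
      exact hpos _ (im_scaled_pos hτ h1 h2)
    · exfalso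
      have h1 : 0 < Real.pi / 2 := by positivity
      have h2 : Real.pi / 2 < Real.pi := by linarith [Real.pi_pos]
      refine not_strictAntiOn_of_deriv_zero (a := 1) (b := 2) one_lt_two
        (fun x hx => lt_of_lt_of_le one_pos hx.1) ?_ (hB _ h1 h2)
      intro x hx
      have hx0 : (0 : ℝ) < x := hx
      have hd := hasDerivAt_angleSum_ray r pm pp qm qp τ γ hx0 h1 h2
      rw [hc _ (im_scaled_pos hx0 h1 h2), hc0] at hd
      simpa using hd
  -- A → C
  have hAC : (∀ τv θ : ℝ, 0 < τv → 0 < θ → θ < Real.pi →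
      0 < (Rfun r pm pp qm qp τ γ ((τv : ℂ) * Complex.exp ((θ : ℂ) * Complex.I))).im) →
      (∀ τv : ℝ, 0 < τv →
        StrictAntiOn (fun θ : ℝ =>
            ‖((τv : ℂ) * Complex.exp ((θ : ℂ) * Complex.I)) ^ r
              * cval (prodPoly qm qp γ) ((τv : ℂ) * Complex.exp ((θ : ℂ) * Complex.I))
              / cval (prodPoly pm pp τ) ((τv : ℂ) * Complex.exp ((θ : ℂ) * Complex.I))‖)
          (Set.Ioo 0 Real.pi)) := by
    intro hA τv hτ
    apply strictAntiOn_of_deriv_neg (convex_Ioo 0 Real.pi)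
    · intro x hx
      exact (hasDerivAt_absfun_theta r pm pp qm qp τ γ hτ hx.1 hx.2).continuousAt.continuousWithinAt
    · intro x hx
      rw [interior_Ioo] at hx
      rw [(hasDerivAt_absfun_theta r pm pp qm qp τ γ hτ hx.1 hx.2).deriv]
      exact mul_neg_of_neg_of_pos (neg_lt_zero.2 (hA τv x hτ hx.1 hx.2)) (Real.exp_pos _)
  -- C → Im R ≥ 0
  have hCIm : (∀ τv : ℝ, 0 < τv →
      StrictAntiOn (fun θ : ℝ =>
          ‖((τv : ℂ) * Complex.exp ((θ : ℂ) * Complex.I)) ^ r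
            * cval (prodPoly qm qp γ) ((τv : ℂ) * Complex.exp ((θ : ℂ) * Complex.I))
            / cval (prodPoly pm pp τ) ((τv : ℂ) * Complex.exp ((θ : ℂ) * Complex.I))‖)
        (Set.Ioo 0 Real.pi)) →
      ∀ t : ℂ, 0 < t.im → 0 ≤ (Rfun r pm pp qm qp τ γ t).im := by
    intro hC t ht
    obtain ⟨h1, h2⟩ := arg_mem_Ioo_of_im_pos ht
    have hτv := abs_pos_of_im_pos ht
    have hd := hasDerivAt_absfun_theta r pm pp qm qp τ γ hτv h1 h2
    rw [← decomp_UHP ht] at hd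
    have hev : ∀ᶠ y in nhdsWithin t.arg (Set.Ioi t.arg), y ∈ Set.Ioo (0 : ℝ) Real.pi := by
      filter_upwards [mem_nhdsWithin_of_mem_nhds (Ioo_mem_nhds h1 h2)] with y hy
      exact hy
    have hle := deriv_nonpos_of_strictAntiOn hd (hC _ hτv) ⟨h1, h2⟩ hev
    by_contra hneg
    push_neg at hneg
    have hexp := Real.exp_pos ((gfun r pm pp qm qp τ γ t).re)
    nlinarith
  -- C → A
  have hCA : (∀ τv : ℝ, 0 < τv →
      StrictAntiOn (fun θ : ℝ =>
          ‖((τv : ℂ) * Complex.exp ((θ : ℂ) * Complex.I)) ^ r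
            * cval (prodPoly qm qp γ) ((τv : ℂ) * Complex.exp ((θ : ℂ) * Complex.I))
            / cval (prodPoly pm pp τ) ((τv : ℂ) * Complex.exp ((θ : ℂ) * Complex.I))‖)
        (Set.Ioo 0 Real.pi)) →
      (∀ τv θ : ℝ, 0 < τv → 0 < θ → θ < Real.pi →
        0 < (Rfun r pm pp qm qp τ γ ((τv : ℂ) * Complex.exp ((θ : ℂ) * Complex.I))).im) := by
    intro hC
    rcases pos_or_const r pm pp qm qp τ γ (hCIm hC) with hpos | ⟨c, hc0, hc⟩
    · intro τv θ hτ h1 h2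
      exact hpos _ (im_scaled_pos hτ h1 h2)
    · exfalso
      have hπ := Real.pi_pos
      refine not_strictAntiOn_of_deriv_zero (a := Real.pi / 4) (b := Real.pi / 2)
        (by linarith) ?_ ?_ (hC 1 one_pos)
      · intro x hx
        exact Set.mem_Ioo.2 ⟨by linarith [hx.1], by linarith [hx.2]⟩
      · intro x hx
        have hd := hasDerivAt_absfun_theta r pm pp qm qp τ γ one_pos hx.1 hx.2
        rw [hc _ (im_scaled_pos one_pos hx.1 hx.2), hc0] at hd
        simpa using hd
  exact ⟨⟨hAB, hBA⟩, ⟨hAC, hCA⟩⟩
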